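/- Let P₃, P₄, P₉ ∈ ℂ[x₀,x₁,y,z,w] be weighted-homogeneous of degrees 3, 4, 9 respectively for the weights deg(x₀,x₁,y,z,w) = (1,1,2,3,4). In the polynomial ring ℂ[x₀,x₁,y,z,w,v,u], let M′ be the 6×6 antisymmetric matrix with upper-triangular entries M′₁₂=0, M′₁₃=z, M′₁₄=v, M′₁₅=y, M′₁₆=x₁, M′₂₃=w, M′₂₄=u, M′₂₅=P₃, M′₂₆=y, M′₃₄=P₉, M′₃₅=u, M′₃₆=v, M′₄₅=wP₄, M′₄₆=zP₄, M′₅₆=0. Then the ideal generated by the fifteen 4×4 Pfaffians of M′ equals the ideal generated by the six 2×2 minors of the 2×4 matrix [[z,v,y,x₁],[w,u,P₃,y]] together with the three elements v²−z²P₄−x₁P₉, vu−zwP₄−yP₉, u²−w²P₄−P₃P₉. -/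
import Mathlib


open Matrix MvPolynomial

/-- The 4×4 Pfaffian `Pf_{ijkl}(N) = N_{ij}N_{kl} − N_{ik}N_{jl} + N_{il}N_{jk}`
of a 6×6 antisymmetric matrix. -/
def pf {R : Type*} [CommRing R] (N : Matrix (Fin 6) (Fin 6) R) (i j k ll : Fin 6) : R :=
  N i j * N k ll - N i k * N j ll + N i ll * N j k

/-- The set of the fifteen 4×4 Pfaffians of a 6×6 antisymmetric matrix. -/
def pfaffians {R : Type*} [CommRing R] (N : Matrix (Fin 6) (Fin 6) R) : Set R :=
  { x | ∃ i j k l : Fin 6, i < j ∧ j < k ∧ k < l ∧ x = pf N i j k l }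


lemma pfMemAux {R : Type*} [CommRing R] {S : Set R} (a c x : R)
    (h : a ∈ S) (hx : x = c * a) : x ∈ Ideal.span S :=
  hx ▸ Ideal.mul_mem_left _ c (Ideal.subset_span h)

set_option maxHeartbeats 1600000 in
/-- In `ℂ[x₀,x₁,y,z,w,v,u]` (variables `X 0, …, X 6` of weights `1,1,2,3,4,5,6`), let
`P₃, P₄, P₉` be weighted-homogeneous polynomials of degrees `3, 4, 9` in the first five
variables, and let `M′` be the antisymmetric matrix of Theorem
`famigliadidimensione36`.  Then the ideal of the fifteen 4×4 Pfaffians of `M′` equals the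
ideal generated by the six 2×2 minors of `[[z,v,y,x₁],[w,u,P₃,y]]` together with
`v²−z²P₄−x₁P₉`, `vu−zwP₄−yP₉`, `u²−w²P₄−P₃P₉`. -/
theorem pfaffian_ideal_IIIb
    (P3 P4 P9 : MvPolynomial (Fin 7) ℂ)
    (hP3vars : ∀ d ∈ P3.support, d 5 = 0 ∧ d 6 = 0)
    (hP4vars : ∀ d ∈ P4.support, d 5 = 0 ∧ d 6 = 0)
    (hP9vars : ∀ d ∈ P9.support, d 5 = 0 ∧ d 6 = 0)
    (hP3 : P3.IsWeightedHomogeneous ![1, 1, 2, 3, 4, 5, 6] 3)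
    (hP4 : P4.IsWeightedHomogeneous ![1, 1, 2, 3, 4, 5, 6] 4)
    (hP9 : P9.IsWeightedHomogeneous ![1, 1, 2, 3, 4, 5, 6] 9)
    (M' : Matrix (Fin 6) (Fin 6) (MvPolynomial (Fin 7) ℂ))
    (hM' : M' = !![0, 0, X 3, X 5, X 2, X 1;
                   0, 0, X 4, X 6, P3, X 2;
                   -X 3, -X 4, 0, P9, X 6, X 5;
                   -X 5, -X 6, -P9, 0, X 4 * P4, X 3 * P4;
                   -X 2, -P3, -X 6, -(X 4 * P4), 0, 0;
                   -X 1, -X 2, -X 5, -(X 3 * P4), 0, 0]) :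
    Ideal.span (pfaffians M') =
      Ideal.span ({X 3 * X 6 - X 5 * X 4, X 3 * P3 - X 2 * X 4, X 3 * X 2 - X 1 * X 4,
        X 5 * P3 - X 2 * X 6, X 5 * X 2 - X 1 * X 6, (X 2)^2 - X 1 * P3,
        (X 5)^2 - (X 3)^2 * P4 - X 1 * P9,
        X 5 * X 6 - X 3 * X 4 * P4 - X 2 * P9,
        (X 6)^2 - (X 4)^2 * P4 - P3 * P9} : Set (MvPolynomial (Fin 7) ℂ)) := by
  set SS : Set (MvPolynomial (Fin 7) ℂ) :=
    {X 3 * X 6 - X 5 * X 4, X 3 * P3 - X 2 * X 4, X 3 * X 2 - X 1 * X 4,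
      X 5 * P3 - X 2 * X 6, X 5 * X 2 - X 1 * X 6, (X 2)^2 - X 1 * P3,
      (X 5)^2 - (X 3)^2 * P4 - X 1 * P9,
      X 5 * X 6 - X 3 * X 4 * P4 - X 2 * P9,
      (X 6)^2 - (X 4)^2 * P4 - P3 * P9} with hSS
  have e1 : pf M' 0 1 2 3 = (-1) * (X 3 * X 6 - X 5 * X 4) := by
    rw [hM']; show (0 : MvPolynomial (Fin 7) ℂ) * P9 - X 3 * X 6 + X 5 * X 4 = _; ring
  have e2 : pf M' 0 1 2 4 = (-1) * (X 3 * P3 - X 2 * X 4) := by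
    rw [hM']; show (0 : MvPolynomial (Fin 7) ℂ) * X 6 - X 3 * P3 + X 2 * X 4 = _; ring
  have e3 : pf M' 0 1 2 5 = (-1) * (X 3 * X 2 - X 1 * X 4) := by
    rw [hM']; show (0 : MvPolynomial (Fin 7) ℂ) * X 5 - X 3 * X 2 + X 1 * X 4 = _; ring
  have e4 : pf M' 0 1 3 4 = (-1) * (X 5 * P3 - X 2 * X 6) := by
    rw [hM']; show (0 : MvPolynomial (Fin 7) ℂ) * (X 4 * P4) - X 5 * P3 + X 2 * X 6 = _; ring
  have e5 : pf M' 0 1 3 5 = (-1) * (X 5 * X 2 - X 1 * X 6) := by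
    rw [hM']; show (0 : MvPolynomial (Fin 7) ℂ) * (X 3 * P4) - X 5 * X 2 + X 1 * X 6 = _; ring
  have e6 : pf M' 0 1 4 5 = (-1) * ((X 2)^2 - X 1 * P3) := by
    rw [hM']; show (0 : MvPolynomial (Fin 7) ℂ) * 0 - X 2 * X 2 + X 1 * P3 = _; ring
  have e7 : pf M' 0 2 3 4 = (-1) * (X 5 * X 6 - X 3 * X 4 * P4 - X 2 * P9) := by
    rw [hM']; show X 3 * (X 4 * P4) - X 5 * X 6 + X 2 * P9 = _; ring
  have e8 : pf M' 0 2 3 5 = (-1) * ((X 5)^2 - (X 3)^2 * P4 - X 1 * P9) := by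
    rw [hM']; show X 3 * (X 3 * P4) - X 5 * X 5 + X 1 * P9 = _; ring
  have e9 : pf M' 0 2 4 5 = (-1) * (X 5 * X 2 - X 1 * X 6) := by
    rw [hM']; show X 3 * 0 - X 2 * X 5 + X 1 * X 6 = _; ring
  have e10 : pf M' 0 3 4 5 = (-P4) * (X 3 * X 2 - X 1 * X 4) := by
    rw [hM']; show X 5 * 0 - X 2 * (X 3 * P4) + X 1 * (X 4 * P4) = _; ring
  have e11 : pf M' 1 2 3 4 = (-1) * ((X 6)^2 - (X 4)^2 * P4 - P3 * P9) := by
    rw [hM']; show X 4 * (X 4 * P4) - X 6 * X 6 + P3 * P9 = _; ring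
  have e12 : pf M' 1 2 3 5 = (-1) * (X 5 * X 6 - X 3 * X 4 * P4 - X 2 * P9) := by
    rw [hM']; show X 4 * (X 3 * P4) - X 6 * X 5 + X 2 * P9 = _; ring
  have e13 : pf M' 1 2 4 5 = (-1) * (X 5 * P3 - X 2 * X 6) := by
    rw [hM']; show X 4 * 0 - P3 * X 5 + X 2 * X 6 = _; ring
  have e14 : pf M' 1 3 4 5 = (-P4) * (X 3 * P3 - X 2 * X 4) := by
    rw [hM']; show X 6 * 0 - P3 * (X 3 * P4) + X 2 * (X 4 * P4) = _; ring
  have e15 : pf M' 2 3 4 5 = (-P4) * (X 3 * X 6 - X 5 * X 4) := by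
    rw [hM']; show P9 * 0 - X 6 * (X 3 * P4) + X 5 * (X 4 * P4) = _; ring
  apply le_antisymm
  · rw [Ideal.span_le]
    rintro x ⟨i, j, k, l, hij, hjk, hkl, rfl⟩
    have h1 : pf M' 0 1 2 3 ∈ Ideal.span SS :=
      pfMemAux _ _ _ (by simp [SS]) e1
    have h2 : pf M' 0 1 2 4 ∈ Ideal.span SS :=
      pfMemAux _ _ _ (by simp [SS]) e2
    have h3 : pf M' 0 1 2 5 ∈ Ideal.span SS :=
      pfMemAux _ _ _ (by simp [SS]) e3
    have h4 : pf M' 0 1 3 4 ∈ Ideal.span SS :=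
      pfMemAux _ _ _ (by simp [SS]) e4
    have h5 : pf M' 0 1 3 5 ∈ Ideal.span SS :=
      pfMemAux _ _ _ (by simp [SS]) e5
    have h6 : pf M' 0 1 4 5 ∈ Ideal.span SS :=
      pfMemAux _ _ _ (by simp [SS]) e6
    have h7 : pf M' 0 2 3 4 ∈ Ideal.span SS :=
      pfMemAux _ _ _ (by simp [SS]) e7
    have h8 : pf M' 0 2 3 5 ∈ Ideal.span SS :=
      pfMemAux _ _ _ (by simp [SS]) e8
    have h9 : pf M' 0 2 4 5 ∈ Ideal.span SS :=
      pfMemAux _ _ _ (by simp [SS]) e9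
    have h10 : pf M' 0 3 4 5 ∈ Ideal.span SS :=
      pfMemAux _ _ _ (by simp [SS]) e10
    have h11 : pf M' 1 2 3 4 ∈ Ideal.span SS :=
      pfMemAux _ _ _ (by simp [SS]) e11
    have h12 : pf M' 1 2 3 5 ∈ Ideal.span SS :=
      pfMemAux _ _ _ (by simp [SS]) e12
    have h13 : pf M' 1 2 4 5 ∈ Ideal.span SS :=
      pfMemAux _ _ _ (by simp [SS]) e13
    have h14 : pf M' 1 3 4 5 ∈ Ideal.span SS :=
      pfMemAux _ _ _ (by simp [SS]) e14
    have h15 : pf M' 2 3 4 5 ∈ Ideal.span SS :=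
      pfMemAux _ _ _ (by simp [SS]) e15
    fin_cases i <;> fin_cases j <;> (try exact absurd hij (by decide)) <;>
      fin_cases k <;> (try exact absurd hjk (by decide)) <;>
      fin_cases l <;> (try exact absurd hkl (by decide)) <;>
      first
        | exact h1 | exact h2 | exact h3 | exact h4 | exact h5 | exact h6 | exact h7 | exact h8 | exact h9 | exact h10 | exact h11 | exact h12 | exact h13 | exact h14 | exact h15
  · rw [Ideal.span_le]
    intro x hx
    simp only [hSS, Set.mem_insert_iff, Set.mem_singleton_iff] at hx
    rcases hx with rfl | rfl | rfl | rfl | rfl | rfl | rfl | rfl | rfl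
    · exact pfMemAux (pf M' 0 1 2 3) (-1) _
        ⟨0, 1, 2, 3, by decide, by decide, by decide, rfl⟩ (by rw [e1]; ring)
    · exact pfMemAux (pf M' 0 1 2 4) (-1) _
        ⟨0, 1, 2, 4, by decide, by decide, by decide, rfl⟩ (by rw [e2]; ring)
    · exact pfMemAux (pf M' 0 1 2 5) (-1) _
        ⟨0, 1, 2, 5, by decide, by decide, by decide, rfl⟩ (by rw [e3]; ring)
    · exact pfMemAux (pf M' 0 1 3 4) (-1) _
        ⟨0, 1, 3, 4, by decide, by decide, by decide, rfl⟩ (by rw [e4]; ring)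
    · exact pfMemAux (pf M' 0 1 3 5) (-1) _
        ⟨0, 1, 3, 5, by decide, by decide, by decide, rfl⟩ (by rw [e5]; ring)
    · exact pfMemAux (pf M' 0 1 4 5) (-1) _
        ⟨0, 1, 4, 5, by decide, by decide, by decide, rfl⟩ (by rw [e6]; ring)
    · exact pfMemAux (pf M' 0 2 3 5) (-1) _
        ⟨0, 2, 3, 5, by decide, by decide, by decide, rfl⟩ (by rw [e8]; ring)
    · exact pfMemAux (pf M' 0 2 3 4) (-1) _
        ⟨0, 2, 3, 4, by decide, by decide, by decide, rfl⟩ (by rw [e7]; ring)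
    · exact pfMemAux (pf M' 1 2 3 4) (-1) _
        ⟨1, 2, 3, 4, by decide, by decide, by decide, rfl⟩ (by rw [e11]; ring)
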